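/- arXiv:2205.00812 — 2 statements merged into one kernel-verified Lean document; each statement's English description precedes it below -/
import Mathlib

section
/- Let γ ∈ (0,2) and define δ_γ = 0 for γ ∈ (0,1), δ_γ = 1/2 for γ = 1 and δ_γ = 1 for γ ∈ (1,2). Let T > 0 and let G ∈ 𝒮. Then there exists a constant C > 0 such that for every integer n ≥ 1, (1/n) · Σ_{x,y ∈ ℤ} sup_{s ∈ [0,T]} n^γ |G(s,(x+1)/n) − G(s,x/n) + G(s,y/n) − G(s,(y+1)/n)| · p(y−x) ≤ C · max{ n^{γ−2}, n^{−1}, n^{γ−1−δ_γ} }. -/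
open MeasureTheory Filter Set ENNReal

/-- Normalizing constant `c_γ = (Σ_{z ≠ 0} |z|^{-γ-1})⁻¹`. -/
noncomputable def cGamma (γ : ℝ) : ℝ :=
  (∑' z : ℤ, if z = 0 then 0 else |(z : ℝ)| ^ (-γ - 1))⁻¹

/-- Transition probability `p(z) = c_γ |z|^{-γ-1}` for `z ≠ 0`, `p(0) = 0`. -/
noncomputable def transP (γ : ℝ) (z : ℤ) : ℝ :=
  if z = 0 then 0 else cGamma γ * |(z : ℝ)| ^ (-γ - 1)

/-- The space of test functions `𝒮 = P([0,T], C_c^∞(ℝ))`: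
functions of the form `G(t,u) = Σ_{j=0}^k t^j G_j(u)` with `G_j` smooth compactly supported. -/
def IsTestS (G : ℝ → ℝ → ℝ) : Prop :=
  ∃ k : ℕ, ∃ Gj : ℕ → ℝ → ℝ,
    (∀ j ≤ k, ContDiff ℝ (⊤ : ℕ∞) (Gj j) ∧ HasCompactSupport (Gj j)) ∧
    ∀ t u : ℝ, G t u = ∑ j ∈ Finset.range (k + 1), t ^ j * Gj j u

/-- The fractional Laplacian `-(-Δ)^{γ/2}` of a function `G : ℝ → ℝ`, defined as
`c_γ · lim_{ε → 0⁺} ∫_{|u-v| ≥ ε} (G(v) - G(u))/|u-v|^{1+γ} dv`. -/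
noncomputable def fracLap (γ : ℝ) (G : ℝ → ℝ) (u : ℝ) : ℝ :=
  cGamma γ * limUnder (nhdsWithin 0 (Set.Ioi 0))
    (fun ε : ℝ => ∫ v in {v : ℝ | ε ≤ |u - v|}, (G v - G u) / |u - v| ^ (1 + γ))

private lemma abs_sub_le_of_deriv_bound {f : ℝ → ℝ} (hf : Differentiable ℝ f) {C : ℝ}
    (hC : ∀ x, |deriv f x| ≤ C) (u v : ℝ) : |f u - f v| ≤ C * |u - v| := by
  have := Convex.norm_image_sub_le_of_norm_deriv_le (f := f)
    (fun x _ => hf x) (fun x _ => by simpa [Real.norm_eq_abs] using hC x) convex_univ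
    (Set.mem_univ v) (Set.mem_univ u)
  simpa [Real.norm_eq_abs] using this

private lemma min_le_rpow_interp {a b δ : ℝ} (ha : 0 ≤ a) (hb : 0 ≤ b) (h0 : 0 ≤ δ)
    (h1 : δ ≤ 1) : min a b ≤ a ^ (1 - δ) * b ^ δ := by
  rcases le_total a b with h | h
  · rw [min_eq_left h]
    have e : a = a ^ (1 - δ) * a ^ δ := by
      rw [← Real.rpow_add' ha (by norm_num)]
      norm_num
    nth_rewrite 1 [e]
    exact mul_le_mul_of_nonneg_left (Real.rpow_le_rpow ha h h0) (Real.rpow_nonneg ha _)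
  · rw [min_eq_right h]
    have e : b = b ^ (1 - δ) * b ^ δ := by
      rw [← Real.rpow_add' hb (by norm_num)]
      norm_num
    nth_rewrite 1 [e]
    exact mul_le_mul_of_nonneg_right (Real.rpow_le_rpow hb h (by linarith))
      (Real.rpow_nonneg hb _)

private lemma pack {g : ℝ → ℝ} (hs : ContDiff ℝ ((⊤:ℕ∞) : WithTop ℕ∞) g)
    (hc : HasCompactSupport g) :
    ∃ B1 B2 A : ℝ, 0 ≤ B1 ∧ 0 ≤ B2 ∧ 0 ≤ A ∧
      (∀ u v, |g u - g v| ≤ B1 * |u - v|) ∧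
      (∀ h u v, |g (u + h) - g u - (g (v + h) - g v)| ≤ B2 * |h| * |u - v|) ∧
      (∀ u, A < |u| → g u = 0) := by
  have hd1 : Differentiable ℝ g := hs.differentiable (by simp)
  have hs' : ContDiff ℝ ((⊤:ℕ∞) : WithTop ℕ∞) (deriv g) := (contDiff_infty_iff_deriv.mp hs).2
  have hd2 : Differentiable ℝ (deriv g) := hs'.differentiable (by simp)
  have hc' : HasCompactSupport (deriv g) := hc.deriv
  have hc'' : HasCompactSupport (deriv (deriv g)) := hc'.deriv
  obtain ⟨C1, hC1⟩ := hc'.exists_bound_of_continuous hs'.continuous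
  obtain ⟨C2, hC2⟩ := hc''.exists_bound_of_continuous ((contDiff_infty_iff_deriv.mp hs').2).continuous
  set B1 := max C1 0 with hB1
  set B2 := max C2 0 with hB2
  have hB1n : 0 ≤ B1 := le_max_right _ _
  have hB2n : 0 ≤ B2 := le_max_right _ _
  have hC1' : ∀ x, |deriv g x| ≤ B1 := fun x =>
    le_trans (by simpa [Real.norm_eq_abs] using hC1 x) (le_max_left _ _)
  have hC2' : ∀ x, |deriv (deriv g) x| ≤ B2 := fun x =>
    le_trans (by simpa [Real.norm_eq_abs] using hC2 x) (le_max_left _ _)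
  obtain ⟨r, hr⟩ := hc.isBounded.subset_closedBall 0
  set A := max r 0 with hA
  refine ⟨B1, B2, A, hB1n, hB2n, le_max_right _ _,
    fun u v => abs_sub_le_of_deriv_bound hd1 hC1' u v, ?_, ?_⟩
  · intro h u v
    set ψ : ℝ → ℝ := fun u => g (u + h) - g u with hψ
    have hdψ : Differentiable ℝ ψ := (hd1.comp (differentiable_id.add_const h)).sub hd1
    have hderiv : ∀ x, deriv ψ x = deriv g (x + h) - deriv g x := by
      intro x
      have e1 : DifferentiableAt ℝ (fun u : ℝ => g (u + h)) x :=
        DifferentiableAt.comp x (hd1 (x + h)) (differentiableAt_id.add_const h)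
      rw [hψ, deriv_fun_sub e1 (hd1 x), deriv_comp_add_const]
    have hlip : ∀ x, |deriv ψ x| ≤ B2 * |h| := by
      intro x
      rw [hderiv x]
      have := abs_sub_le_of_deriv_bound hd2 hC2' (x + h) x
      simpa using this
    exact abs_sub_le_of_deriv_bound hdψ hlip u v
  · intro u hu
    apply image_eq_zero_of_notMem_tsupport
    intro hmem
    have h1 := hr hmem
    simp only [Metric.mem_closedBall, Real.dist_eq, sub_zero] at h1
    have : |u| ≤ A := le_trans h1 (le_max_left _ _)
    linarith

private lemma cGamma_nonneg (γ : ℝ) : 0 ≤ cGamma γ :=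
  inv_nonneg.mpr (tsum_nonneg fun z => by split <;> positivity)

private lemma transP_nonneg (γ : ℝ) (z : ℤ) : 0 ≤ transP γ z := by
  unfold transP
  split
  · exact le_rfl
  · exact mul_nonneg (cGamma_nonneg γ) (Real.rpow_nonneg (abs_nonneg _) _)

private lemma summable_weight (γ δ : ℝ) (h : 1 < γ + 1 - δ) :
    Summable (fun z : ℤ => |(z : ℝ)| ^ δ * transP γ z) := by
  have key : ∀ z : ℤ, |(z : ℝ)| ^ δ * transP γ z = cGamma γ * |(z : ℝ)| ^ (-(γ + 1 - δ)) := by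
    intro z
    rcases eq_or_ne z 0 with hz | hz
    · simp only [hz, transP, if_pos rfl, mul_zero, Int.cast_zero, abs_zero]
      rw [Real.zero_rpow (by linarith : -(γ + 1 - δ) ≠ 0), mul_zero]
      simp
    · have hz' : ((z : ℝ)) ≠ 0 := Int.cast_ne_zero.mpr hz
      have hzpos : (0 : ℝ) < |(z : ℝ)| := abs_pos.mpr hz'
      simp only [transP, if_neg hz]
      rw [show |(z:ℝ)| ^ δ * (cGamma γ * |(z:ℝ)| ^ (-γ - 1)) =
        cGamma γ * (|(z:ℝ)| ^ δ * |(z:ℝ)| ^ (-γ - 1)) by ring, ← Real.rpow_add hzpos]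
      ring_nf
  exact ((Real.summable_abs_int_rpow h).mul_left (cGamma γ)).congr fun z => (key z).symm

private lemma rpow_alg {a b w nr δ : ℝ} (ha : 0 ≤ a) (hb : 0 ≤ b) (hw : 0 ≤ w) (hn : 0 < nr)
    (_hδ0 : 0 ≤ δ) (_hδ1 : δ ≤ 1) :
    (a / nr) ^ (1 - δ) * (b / nr ^ 2 * w) ^ δ = a ^ (1 - δ) * b ^ δ * w ^ δ * nr ^ (-1 - δ) := by
  have h1 : (a / nr) ^ (1 - δ) = a ^ (1 - δ) * (nr ^ (1 - δ))⁻¹ := by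
    rw [Real.div_rpow ha hn.le, div_eq_mul_inv]
  have h2 : (b / nr ^ 2 * w) ^ δ = b ^ δ * (nr ^ (2 * δ))⁻¹ * w ^ δ := by
    rw [Real.mul_rpow (by positivity) hw, Real.div_rpow hb (by positivity), div_eq_mul_inv]
    congr 2
    rw [← Real.rpow_natCast nr 2, ← Real.rpow_mul hn.le]
    norm_num
  rw [h1, h2]
  have h3 : (nr ^ (1 - δ))⁻¹ * (nr ^ (2 * δ))⁻¹ = nr ^ (-1 - δ) := by
    rw [← Real.rpow_neg hn.le, ← Real.rpow_neg hn.le, ← Real.rpow_add hn]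
    ring_nf
  calc a ^ (1 - δ) * (nr ^ (1 - δ))⁻¹ * (b ^ δ * (nr ^ (2 * δ))⁻¹ * w ^ δ)
      = a ^ (1 - δ) * b ^ δ * w ^ δ * ((nr ^ (1 - δ))⁻¹ * (nr ^ (2 * δ))⁻¹) := by ring
    _ = a ^ (1 - δ) * b ^ δ * w ^ δ * nr ^ (-1 - δ) := by rw [h3]

/-- Proposition: bound on the error term `R_n^G`. -/
theorem statement0 (γ T δγ : ℝ) (hγ : γ ∈ Set.Ioo (0 : ℝ) 2) (hT : 0 < T)
    (hδ0 : γ < 1 → δγ = 0) (hδ1 : γ = 1 → δγ = 1 / 2) (hδ2 : 1 < γ → δγ = 1)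
    (G : ℝ → ℝ → ℝ) (hG : IsTestS G) :
    ∃ C : ℝ, 0 < C ∧ ∀ n : ℕ, 1 ≤ n →
      (n : ℝ≥0∞)⁻¹ *
        ∑' q : ℤ × ℤ, ⨆ s ∈ Set.Icc (0 : ℝ) T, ENNReal.ofReal
          ((n : ℝ) ^ γ *
            |G s (((q.1 : ℝ) + 1) / n) - G s ((q.1 : ℝ) / n)
              + G s ((q.2 : ℝ) / n) - G s (((q.2 : ℝ) + 1) / n)| *
            transP γ (q.2 - q.1))
      ≤ ENNReal.ofReal
          (C * max (max ((n : ℝ) ^ (γ - 2)) ((n : ℝ) ^ (-1 : ℝ))) ((n : ℝ) ^ (γ - 1 - δγ))) := by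
  obtain ⟨hγ0, hγ2⟩ := hγ
  obtain ⟨k, Gj, hGj, hGform⟩ := hG
  have hδ : 0 ≤ δγ ∧ δγ ≤ 1 ∧ δγ < γ := by
    rcases lt_trichotomy γ 1 with h | h | h
    · rw [hδ0 h]; exact ⟨le_rfl, zero_le_one, hγ0⟩
    · rw [hδ1 h, h]; norm_num
    · rw [hδ2 h]; exact ⟨zero_le_one, le_rfl, h⟩
  obtain ⟨hδa, hδb, hδc⟩ := hδ
  have hP : ∀ j, ∃ B1 B2 A : ℝ, 0 ≤ B1 ∧ 0 ≤ B2 ∧ 0 ≤ A ∧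
      (j ≤ k → ((∀ u v, |Gj j u - Gj j v| ≤ B1 * |u - v|) ∧
        (∀ h u v, |Gj j (u + h) - Gj j u - (Gj j (v + h) - Gj j v)| ≤ B2 * |h| * |u - v|) ∧
        (∀ u, A < |u| → Gj j u = 0))) := by
    intro j
    by_cases hj : j ≤ k
    · obtain ⟨B1, B2, A, h1, h2, h3, h4, h5, h6⟩ :=
        pack ((hGj j hj).1.of_le (by simp)) (hGj j hj).2
      exact ⟨B1, B2, A, h1, h2, h3, fun _ => ⟨h4, h5, h6⟩⟩
    · exact ⟨0, 0, 0, le_rfl, le_rfl, le_rfl, fun h => absurd h hj⟩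
  choose B1 B2 A hB1n hB2n hAn hprop using hP
  set Mk := (max T 1) ^ k with hMkdef
  have hMk1 : (1:ℝ) ≤ Mk := one_le_pow₀ (le_max_right T 1)
  have hMks : ∀ s ∈ Set.Icc (0:ℝ) T, ∀ j ≤ k, s ^ j ≤ Mk := by
    intro s hs j hj
    calc s ^ j ≤ (max T 1) ^ j :=
          pow_le_pow_left₀ hs.1 (le_trans hs.2 (le_max_left T 1)) j
      _ ≤ (max T 1) ^ k := pow_le_pow_right₀ (le_max_right T 1) hj
  set Kj : ℕ → ℝ := fun j => (2 * B1 j) ^ (1 - δγ) * (B2 j) ^ δγ with hKjdef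
  have hKjn : ∀ j, 0 ≤ Kj j := fun j =>
    mul_nonneg (Real.rpow_nonneg (by linarith [hB1n j]) _) (Real.rpow_nonneg (hB2n j) _)
  set CK := Mk * ∑ j ∈ Finset.range (k+1), Kj j with hCKdef
  have hCKn : 0 ≤ CK := mul_nonneg (by linarith) (Finset.sum_nonneg fun j _ => hKjn j)
  set Am := ∑ j ∈ Finset.range (k+1), A j with hAmdef
  have hAmj : ∀ j ≤ k, A j ≤ Am :=
    fun j hj => Finset.single_le_sum (fun i _ => hAn i) (Finset.mem_range_succ_iff.mpr hj)
  set M : ℕ := ⌈Am⌉₊ + 1 with hMdef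
  have hM1 : 1 ≤ M := Nat.le_add_left 1 _
  have hMA : ∀ j ≤ k, A j ≤ (M:ℝ) - 1 := by
    intro j hj
    have h1 := Nat.le_ceil Am
    have h2 : ((⌈Am⌉₊ : ℝ) : ℝ) = (M:ℝ) - 1 := by rw [hMdef]; push_cast; ring
    linarith [hAmj j hj]
  have hsum1 : (1:ℝ) < γ + 1 - δγ := by linarith
  set St := ∑' z : ℤ, |(z:ℝ)| ^ δγ * transP γ z with hStdef
  have hStn : 0 ≤ St := tsum_nonneg fun z =>
    mul_nonneg (Real.rpow_nonneg (abs_nonneg _) _) (transP_nonneg γ z)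
  have hC0 : (0:ℝ) ≤ 6 * M * CK * St :=
    mul_nonneg (mul_nonneg (by positivity) hCKn) hStn
  refine ⟨6 * M * CK * St + 1, by linarith, ?_⟩
  intro n hn
  have hn0 : (0:ℝ) < n := by exact_mod_cast Nat.pos_of_ne_zero (by omega)
  have hn1 : (1:ℝ) ≤ n := by exact_mod_cast hn
  set Ncap : ℕ := M * n with hNcapdef
  have hNcap1 : 1 ≤ Ncap := Nat.one_le_iff_ne_zero.mpr (by positivity)
  set W : Finset ℤ := Finset.Icc (-(Ncap:ℤ)) (Ncap:ℤ) with hWdef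
  have hcard : W.card = 2 * Ncap + 1 := by
    rw [hWdef, Int.card_Icc]
    have : (Ncap:ℤ) + 1 - (-(Ncap:ℤ)) = ((2 * Ncap + 1 : ℕ) : ℤ) := by push_cast; ring
    rw [this, Int.toNat_natCast]
  -- support property
  have hsupp : ∀ x : ℤ, x ∉ W → ∀ j ≤ k,
      Gj j ((x:ℝ)/n) = 0 ∧ Gj j (((x:ℝ)+1)/n) = 0 := by
    intro x hx j hj
    have hxb : (Ncap:ℤ) < |x| := by
      simp only [hWdef, Finset.mem_Icc, not_and_or, not_le] at hx
      rw [lt_abs]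
      omega
    have hxr : (M:ℝ) * n + 1 ≤ |(x:ℝ)| := by
      have h1 : (Ncap:ℤ) + 1 ≤ |x| := hxb
      have h2 : ((Ncap:ℤ):ℝ) + 1 ≤ ((|x|:ℤ):ℝ) := by exact_mod_cast h1
      rw [Int.cast_abs] at h2
      have h3 : ((Ncap:ℤ):ℝ) = (M:ℝ) * n := by rw [hNcapdef]; push_cast; ring
      linarith
    have hAj : A j ≤ (M:ℝ) - 1 := hMA j hj
    have habs : |(x:ℝ)| - 1 ≤ |(x:ℝ) + 1| := by
      have := abs_add_le ((x:ℝ) + 1) (-1)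
      simp only [add_neg_cancel_right, abs_neg, abs_one] at this
      linarith
    have hAjn : A j * n ≤ ((M:ℝ) - 1) * n := mul_le_mul_of_nonneg_right hAj hn0.le
    constructor
    · apply (hprop j hj).2.2
      rw [abs_div, abs_of_pos hn0, lt_div_iff₀ hn0]
      nlinarith
    · apply (hprop j hj).2.2
      rw [abs_div, abs_of_pos hn0, lt_div_iff₀ hn0]
      nlinarith
  set np := (n:ℝ) ^ (-1 - δγ) with hnpdef
  have hnpn : (0:ℝ) ≤ np := Real.rpow_nonneg hn0.le _
  have hnγn : (0:ℝ) ≤ (n:ℝ) ^ γ := Real.rpow_nonneg hn0.le _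
  set U : ℤ → ℤ → ℝ := fun x y =>
    if x ∈ W ∨ y ∈ W then CK * |((y - x : ℤ) : ℝ)| ^ δγ * np else 0 with hUdef
  -- pointwise bound
  have hptw : ∀ s ∈ Set.Icc (0:ℝ) T, ∀ x y : ℤ,
      |G s (((x:ℝ)+1)/n) - G s ((x:ℝ)/n) + G s ((y:ℝ)/n) - G s (((y:ℝ)+1)/n)| ≤ U x y := by
    intro s hs x y
    have hD : G s (((x:ℝ)+1)/n) - G s ((x:ℝ)/n) + G s ((y:ℝ)/n) - G s (((y:ℝ)+1)/n)
        = ∑ j ∈ Finset.range (k+1), s ^ j *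
          (Gj j (((x:ℝ)+1)/n) - Gj j ((x:ℝ)/n) + Gj j ((y:ℝ)/n) - Gj j (((y:ℝ)+1)/n)) := by
      rw [hGform, hGform, hGform, hGform, ← Finset.sum_sub_distrib, ← Finset.sum_add_distrib,
        ← Finset.sum_sub_distrib]
      exact Finset.sum_congr rfl fun j _ => by ring
    rw [hD]
    by_cases hxy : x ∈ W ∨ y ∈ W
    · rw [hUdef]
      simp only [if_pos hxy]
      set w := |((y - x : ℤ) : ℝ)| with hwdef
      have hwn : 0 ≤ w := abs_nonneg _
      calc |∑ j ∈ Finset.range (k+1), s ^ j *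
              (Gj j (((x:ℝ)+1)/n) - Gj j ((x:ℝ)/n) + Gj j ((y:ℝ)/n) - Gj j (((y:ℝ)+1)/n))|
          ≤ ∑ j ∈ Finset.range (k+1), |s ^ j *
              (Gj j (((x:ℝ)+1)/n) - Gj j ((x:ℝ)/n) + Gj j ((y:ℝ)/n) - Gj j (((y:ℝ)+1)/n))| :=
            Finset.abs_sum_le_sum_abs _ _
        _ ≤ ∑ j ∈ Finset.range (k+1), Kj j * (Mk * w ^ δγ * np) := by
            apply Finset.sum_le_sum
            intro j hjm
            have hj : j ≤ k := Finset.mem_range_succ_iff.mp hjm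
            set t := Gj j (((x:ℝ)+1)/n) - Gj j ((x:ℝ)/n) + Gj j ((y:ℝ)/n) - Gj j (((y:ℝ)+1)/n)
              with htdef
            have hb1 : |t| ≤ 2 * B1 j / n := by
              have e1 : t = (Gj j (((x:ℝ)+1)/n) - Gj j ((x:ℝ)/n))
                  + (Gj j ((y:ℝ)/n) - Gj j (((y:ℝ)+1)/n)) := by rw [htdef]; ring
              have i1 := (hprop j hj).1 (((x:ℝ)+1)/n) ((x:ℝ)/n)
              have i2 := (hprop j hj).1 ((y:ℝ)/n) (((y:ℝ)+1)/n)
              have e2 : ((x:ℝ)+1)/n - (x:ℝ)/n = 1/n := by ring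
              have e3 : (y:ℝ)/n - ((y:ℝ)+1)/n = -(1/n) := by ring
              have e4 : |(1:ℝ)/n| = 1/n := abs_of_pos (by positivity)
              rw [e2, e4] at i1
              rw [e3, abs_neg, e4] at i2
              calc |t| ≤ |Gj j (((x:ℝ)+1)/n) - Gj j ((x:ℝ)/n)|
                    + |Gj j ((y:ℝ)/n) - Gj j (((y:ℝ)+1)/n)| := by rw [e1]; exact abs_add_le _ _
                _ ≤ B1 j * (1/n) + B1 j * (1/n) := add_le_add i1 i2
                _ = 2 * B1 j / n := by ring
            have hb2 : |t| ≤ B2 j / (n:ℝ)^2 * w := by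
              have i3 := (hprop j hj).2.1 (1/n) ((x:ℝ)/n) ((y:ℝ)/n)
              have e5 : (x:ℝ)/n + 1/n = ((x:ℝ)+1)/n := by ring
              have e6 : (y:ℝ)/n + 1/n = ((y:ℝ)+1)/n := by ring
              have e7 : t = Gj j ((x:ℝ)/n + 1/n) - Gj j ((x:ℝ)/n)
                  - (Gj j ((y:ℝ)/n + 1/n) - Gj j ((y:ℝ)/n)) := by rw [htdef, e5, e6]; ring
              have e4 : |(1:ℝ)/n| = 1/n := abs_of_pos (by positivity)
              have e8 : |(x:ℝ)/n - (y:ℝ)/n| = w / n := by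
                rw [hwdef]
                rw [show (x:ℝ)/n - (y:ℝ)/n = ((x:ℝ) - y)/n by ring, abs_div, abs_of_pos hn0]
                congr 1
                rw [abs_sub_comm]
                push_cast
                ring_nf
              rw [e7]
              rw [e4, e8] at i3
              calc |Gj j ((x:ℝ)/n + 1/n) - Gj j ((x:ℝ)/n)
                  - (Gj j ((y:ℝ)/n + 1/n) - Gj j ((y:ℝ)/n))| ≤ B2 j * (1/n) * (w/n) := i3
                _ = B2 j / (n:ℝ)^2 * w := by ring
            have hmin : |t| ≤ (2 * B1 j / n) ^ (1 - δγ) * (B2 j / (n:ℝ)^2 * w) ^ δγ :=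
              le_trans (le_min hb1 hb2)
                (min_le_rpow_interp (div_nonneg (by linarith [hB1n j]) hn0.le)
                  (mul_nonneg (div_nonneg (hB2n j) (by positivity)) hwn) hδa hδb)
            have halg : (2 * B1 j / n) ^ (1 - δγ) * (B2 j / (n:ℝ)^2 * w) ^ δγ
                = Kj j * w ^ δγ * np := by
              rw [rpow_alg (by linarith [hB1n j]) (hB2n j) hwn hn0 hδa hδb, hKjdef, hnpdef]
            have hsMk : s ^ j ≤ Mk := hMks s hs j hj
            have hsn : (0:ℝ) ≤ s ^ j := pow_nonneg hs.1 j
            have htn : |s ^ j * t| = s ^ j * |t| := by rw [abs_mul, abs_of_nonneg hsn]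
            rw [htn]
            calc s ^ j * |t| ≤ Mk * (Kj j * w ^ δγ * np) := by
                  apply mul_le_mul hsMk (by rw [← halg]; exact hmin) (abs_nonneg t) (by linarith)
              _ = Kj j * (Mk * w ^ δγ * np) := by ring
        _ = CK * w ^ δγ * np := by
            rw [← Finset.sum_mul, hCKdef]
            ring
    · push_neg at hxy
      have hz : ∀ j ∈ Finset.range (k+1), s ^ j *
          (Gj j (((x:ℝ)+1)/n) - Gj j ((x:ℝ)/n) + Gj j ((y:ℝ)/n) - Gj j (((y:ℝ)+1)/n)) = 0 := by
        intro j hjm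
        have hj : j ≤ k := Finset.mem_range_succ_iff.mp hjm
        obtain ⟨e1, e2⟩ := hsupp x hxy.1 j hj
        obtain ⟨e3, e4⟩ := hsupp y hxy.2 j hj
        rw [e1, e2, e3, e4]
        ring
      rw [Finset.sum_eq_zero hz, hUdef]
      simp [hxy.1, hxy.2]
  -- nonnegativity of U
  have hUn : ∀ x y : ℤ, 0 ≤ U x y := by
    intro x y
    rw [hUdef]
    dsimp only
    split
    · exact mul_nonneg (mul_nonneg hCKn (Real.rpow_nonneg (abs_nonneg _) _)) hnpn
    · exact le_rfl
  -- step 1 : bound the sup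
  have step1 : ∀ q : ℤ × ℤ,
      (⨆ s ∈ Set.Icc (0:ℝ) T, ENNReal.ofReal ((n : ℝ) ^ γ *
        |G s (((q.1 : ℝ) + 1) / n) - G s ((q.1 : ℝ) / n)
          + G s ((q.2 : ℝ) / n) - G s (((q.2 : ℝ) + 1) / n)| * transP γ (q.2 - q.1)))
      ≤ ENNReal.ofReal ((n:ℝ)^γ * U q.1 q.2 * transP γ (q.2 - q.1)) := by
    intro q
    apply iSup₂_le
    intro s hs
    apply ENNReal.ofReal_le_ofReal
    exact mul_le_mul_of_nonneg_right
      (mul_le_mul_of_nonneg_left (hptw s hs q.1 q.2) hnγn) (transP_nonneg _ _)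
  -- the shear equivalence
  let e : ℤ × ℤ ≃ ℤ × ℤ :=
    ⟨fun p => (p.1, p.1 + p.2), fun q => (q.1, q.2 - q.1),
      fun p => by simp, fun q => by simp⟩
  have hne : (n:ℝ≥0∞) ≠ 0 := Nat.cast_ne_zero.mpr (by omega)
  have hnt : (n:ℝ≥0∞) ≠ ⊤ := ENNReal.natCast_ne_top n
  have hK1n : (0:ℝ) ≤ (n:ℝ)^γ * CK * np := mul_nonneg (mul_nonneg hnγn hCKn) hnpn
  -- inner sum bound for fixed z
  have inner : ∀ z : ℤ, (∑' x : ℤ, ENNReal.ofReal ((n:ℝ)^γ * U x (x + z) * transP γ z))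
      ≤ (2 * (W.card : ℝ≥0∞)) *
        ENNReal.ofReal ((n:ℝ)^γ * (CK * |(z:ℝ)| ^ δγ * np) * transP γ z) := by
    intro z
    set c := ENNReal.ofReal ((n:ℝ)^γ * (CK * |(z:ℝ)| ^ δγ * np) * transP γ z) with hcdef
    have hUz : ∀ x : ℤ, ENNReal.ofReal ((n:ℝ)^γ * U x (x+z) * transP γ z)
        = if x ∈ W ∨ x + z ∈ W then c else 0 := by
      intro x
      rw [hUdef]
      dsimp only
      split_ifs with h
      · rw [hcdef]
        congr 3
        rw [show x + z - x = z by ring]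
      · simp
    calc (∑' x : ℤ, ENNReal.ofReal ((n:ℝ)^γ * U x (x + z) * transP γ z))
        = ∑' x : ℤ, (if x ∈ W ∨ x + z ∈ W then c else 0) := tsum_congr hUz
      _ ≤ ∑' x : ℤ, ((if x ∈ W then c else 0) + (if x + z ∈ W then c else 0)) := by
          apply ENNReal.tsum_le_tsum
          intro x
          by_cases h1 : x ∈ W
          · rw [if_pos (Or.inl h1), if_pos h1]
            exact le_self_add
          · by_cases h2 : x + z ∈ W
            · rw [if_pos (Or.inr h2), if_neg h1, if_pos h2, zero_add]
            · rw [if_neg (by tauto : ¬(x ∈ W ∨ x + z ∈ W)), if_neg h1, if_neg h2, zero_add]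
      _ = (∑' x : ℤ, (if x ∈ W then c else 0)) + ∑' x : ℤ, (if x + z ∈ W then c else 0) :=
          ENNReal.tsum_add
      _ = (W.card : ℝ≥0∞) * c + (W.card : ℝ≥0∞) * c := by
          have h1 : (∑' x : ℤ, (if x ∈ W then c else 0)) = (W.card : ℝ≥0∞) * c := by
            rw [tsum_eq_sum (f := fun x : ℤ => if x ∈ W then c else 0)
              (fun x hx => if_neg hx)]
            rw [Finset.sum_congr rfl (fun x hx => if_pos hx), Finset.sum_const, nsmul_eq_mul]
          have h2 : (∑' x : ℤ, (if x + z ∈ W then c else 0))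
              = ∑' x : ℤ, (if x ∈ W then c else 0) := by
            have := (Equiv.addRight z).tsum_eq (f := fun x : ℤ => if x ∈ W then c else 0)
            exact this
          rw [h1, h2, h1]
      _ = (2 * (W.card : ℝ≥0∞)) * c := by ring
  -- main calculation
  calc (n : ℝ≥0∞)⁻¹ *
        ∑' q : ℤ × ℤ, ⨆ s ∈ Set.Icc (0 : ℝ) T, ENNReal.ofReal
          ((n : ℝ) ^ γ *
            |G s (((q.1 : ℝ) + 1) / n) - G s ((q.1 : ℝ) / n)
              + G s ((q.2 : ℝ) / n) - G s (((q.2 : ℝ) + 1) / n)| *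
            transP γ (q.2 - q.1))
      ≤ (n : ℝ≥0∞)⁻¹ * ∑' q : ℤ × ℤ,
          ENNReal.ofReal ((n:ℝ)^γ * U q.1 q.2 * transP γ (q.2 - q.1)) :=
        mul_le_mul_right (ENNReal.tsum_le_tsum step1) _
    _ = (n : ℝ≥0∞)⁻¹ * ∑' p : ℤ × ℤ,
          ENNReal.ofReal ((n:ℝ)^γ * U p.1 (p.1 + p.2) * transP γ p.2) := by
        congr 1
        rw [← Equiv.tsum_eq e (fun q : ℤ × ℤ =>
          ENNReal.ofReal ((n:ℝ)^γ * U q.1 q.2 * transP γ (q.2 - q.1)))]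
        apply tsum_congr
        intro p
        have : p.1 + p.2 - p.1 = p.2 := by ring
        simp only [e, Equiv.coe_fn_mk, this]
    _ = (n : ℝ≥0∞)⁻¹ * ∑' z : ℤ, ∑' x : ℤ,
          ENNReal.ofReal ((n:ℝ)^γ * U x (x + z) * transP γ z) := by
        congr 1
        rw [ENNReal.tsum_prod' (f := fun p : ℤ × ℤ =>
          ENNReal.ofReal ((n:ℝ)^γ * U p.1 (p.1 + p.2) * transP γ p.2))]
        exact ENNReal.tsum_comm
    _ ≤ (n : ℝ≥0∞)⁻¹ * ∑' z : ℤ, (2 * (W.card : ℝ≥0∞)) *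
          ENNReal.ofReal ((n:ℝ)^γ * (CK * |(z:ℝ)| ^ δγ * np) * transP γ z) :=
        mul_le_mul_right (ENNReal.tsum_le_tsum inner) _
    _ = (n : ℝ≥0∞)⁻¹ * ((2 * (W.card : ℝ≥0∞)) *
          ∑' z : ℤ, ENNReal.ofReal ((n:ℝ)^γ * (CK * |(z:ℝ)| ^ δγ * np) * transP γ z)) := by
        rw [ENNReal.tsum_mul_left]
    _ = (n : ℝ≥0∞)⁻¹ * ((2 * (W.card : ℝ≥0∞)) *
          (ENNReal.ofReal ((n:ℝ)^γ * CK * np) * ENNReal.ofReal St)) := by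
        congr 2
        have hre : ∀ z : ℤ, (n:ℝ)^γ * (CK * |(z:ℝ)| ^ δγ * np) * transP γ z
            = ((n:ℝ)^γ * CK * np) * (|(z:ℝ)| ^ δγ * transP γ z) := fun z => by ring
        calc (∑' z : ℤ, ENNReal.ofReal ((n:ℝ)^γ * (CK * |(z:ℝ)| ^ δγ * np) * transP γ z))
            = ∑' z : ℤ, (ENNReal.ofReal ((n:ℝ)^γ * CK * np) *
                ENNReal.ofReal (|(z:ℝ)| ^ δγ * transP γ z)) := by
              apply tsum_congr
              intro z
              rw [hre z, ENNReal.ofReal_mul hK1n]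
          _ = ENNReal.ofReal ((n:ℝ)^γ * CK * np) *
                ∑' z : ℤ, ENNReal.ofReal (|(z:ℝ)| ^ δγ * transP γ z) := ENNReal.tsum_mul_left
          _ = ENNReal.ofReal ((n:ℝ)^γ * CK * np) * ENNReal.ofReal St := by
              rw [hStdef, ENNReal.ofReal_tsum_of_nonneg
                (fun z => mul_nonneg (Real.rpow_nonneg (abs_nonneg _) _) (transP_nonneg γ z))
                (summable_weight γ δγ hsum1)]
    _ ≤ (n : ℝ≥0∞)⁻¹ * ((6 * (M:ℝ≥0∞) * (n:ℝ≥0∞)) *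
          (ENNReal.ofReal ((n:ℝ)^γ * CK * np) * ENNReal.ofReal St)) := by
        apply mul_le_mul_right
        apply mul_le_mul_left
        rw [hcard]
        have hnat : 2 * (2 * Ncap + 1) ≤ 6 * (M * n) := by
          rw [hNcapdef] at *
          omega
        calc (2 : ℝ≥0∞) * ((2 * Ncap + 1 : ℕ) : ℝ≥0∞) = ((2 * (2 * Ncap + 1) : ℕ) : ℝ≥0∞) := by
              push_cast; ring
          _ ≤ ((6 * (M * n) : ℕ) : ℝ≥0∞) := by exact_mod_cast hnat
          _ = 6 * (M:ℝ≥0∞) * (n:ℝ≥0∞) := by push_cast; ring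
    _ = (6 * (M:ℝ≥0∞)) * (ENNReal.ofReal ((n:ℝ)^γ * CK * np) * ENNReal.ofReal St) := by
        calc (n : ℝ≥0∞)⁻¹ * ((6 * (M:ℝ≥0∞) * (n:ℝ≥0∞)) *
            (ENNReal.ofReal ((n:ℝ)^γ * CK * np) * ENNReal.ofReal St))
            = ((n:ℝ≥0∞)⁻¹ * (n:ℝ≥0∞)) * ((6 * (M:ℝ≥0∞)) *
              (ENNReal.ofReal ((n:ℝ)^γ * CK * np) * ENNReal.ofReal St)) := by ring
          _ = (6 * (M:ℝ≥0∞)) * (ENNReal.ofReal ((n:ℝ)^γ * CK * np) * ENNReal.ofReal St) := by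
              rw [ENNReal.inv_mul_cancel hne hnt, one_mul]
    _ = ENNReal.ofReal ((6 * M) * (((n:ℝ)^γ * CK * np) * St)) := by
        have e6 : (6 : ℝ≥0∞) * (M:ℝ≥0∞) = ENNReal.ofReal (6 * (M:ℝ)) := by
          rw [show (6:ℝ) * (M:ℝ) = ((6 * M : ℕ) : ℝ) by push_cast; ring,
            ENNReal.ofReal_natCast]
          push_cast
          ring
        rw [← ENNReal.ofReal_mul hK1n, e6, ← ENNReal.ofReal_mul (by positivity)]
    _ ≤ ENNReal.ofReal ((6 * (M:ℝ) * CK * St + 1) *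
          max (max ((n : ℝ) ^ (γ - 2)) ((n : ℝ) ^ (-1 : ℝ))) ((n : ℝ) ^ (γ - 1 - δγ))) := by
        apply ENNReal.ofReal_le_ofReal
        have hpow : (n:ℝ)^γ * np = (n:ℝ) ^ (γ - 1 - δγ) := by
          rw [hnpdef, ← Real.rpow_add hn0]
          ring_nf
        have hle : (6 * (M:ℝ)) * (((n:ℝ)^γ * CK * np) * St)
            = (6 * (M:ℝ) * CK * St) * ((n:ℝ) ^ (γ - 1 - δγ)) := by
          rw [← hpow]; ring
        rw [hle]
        apply mul_le_mul (by linarith)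
          (le_max_right _ _) (Real.rpow_nonneg hn0.le _) (by linarith)
end

section
/- Comparison of the Dirichlet form with its nearest-neighbor part. Let γ ∈ (0,2), b ∈ (0,1), and let f be a density with respect to ν_b. Then 𝒟(√f, ν_b) ≥ 𝒟_NN(√f, ν_b), where 𝒟_NN(√f, ν_b) := (1/4) · Σ_{x,y ∈ ℤ : |x−y| = 1} p(x−y) ∫_Ω ( √(f(η^{x,y})) − √(f(η)) )² dν_b(η). -/
open MeasureTheory Filter Set ENNReal

/-- The configuration space `Ω = {0,1}^ℤ`, with `true` meaning an occupied site. -/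
abbrev Config := ℤ → Bool

/-- The configuration `η^{x,y}` obtained from `η` by exchanging the values at `x` and `y`. -/
def swapConf (x y : ℤ) (η : Config) : Config :=
  fun z => if z = x then η y else if z = y then η x else η z

/-- Occupation number `η(x) ∈ {0,1}` as a real number. -/
def ind (b : Bool) : ℝ := if b then 1 else 0

/-- The kinetic constraint `c̃_{x,y}(η) = η(x-1) + η(x+1) + η(y-1) + η(y+1)`. -/
noncomputable def ctilde (x y : ℤ) (η : Config) : ℝ :=
  ind (η (x - 1)) + ind (η (x + 1)) + ind (η (y - 1)) + ind (η (y + 1))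

/-- `ν` is the Bernoulli product measure with parameter `b` on `Ω = {0,1}^ℤ`:
a probability measure whose cylinder sets have the i.i.d. Bernoulli(`b`) probabilities. -/
def IsBernoulliProduct (b : ℝ) (ν : MeasureTheory.Measure Config) : Prop :=
  MeasureTheory.IsProbabilityMeasure ν ∧
    ∀ (s : Finset ℤ) (a : ℤ → Bool),
      ν {η : Config | ∀ x ∈ s, η x = a x} =
        ∏ x ∈ s, ENNReal.ofReal (if a x then b else 1 - b)

/-- The Dirichlet form `𝒟(√f, ν_b) = (1/4) Σ_{x,y} p(x-y) I_{x,y}(√f, ν_b)`, where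
`I_{x,y}(√f, ν_b) = ∫ c̃_{x,y}(η) (√f(η^{x,y}) - √f(η))² dν_b`. -/
noncomputable def dirichletForm (γ : ℝ) (ν : MeasureTheory.Measure Config)
    (f : Config → ℝ) : ℝ≥0∞ :=
  (1 / 4) * ∑' q : ℤ × ℤ, ENNReal.ofReal (transP γ (q.1 - q.2)) *
    ∫⁻ η, ENNReal.ofReal (ctilde q.1 q.2 η *
      (Real.sqrt (f (swapConf q.1 q.2 η)) - Real.sqrt (f η)) ^ 2) ∂ν

/-- The nearest-neighbor Dirichlet form
`𝒟_NN(√f, ν_b) = (1/4) Σ_{|x-y|=1} p(x-y) ∫ (√f(η^{x,y}) - √f(η))² dν_b`. -/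
noncomputable def dirichletFormNN (γ : ℝ) (ν : MeasureTheory.Measure Config)
    (f : Config → ℝ) : ℝ≥0∞ :=
  (1 / 4) * ∑' q : ℤ × ℤ,
    if |q.1 - q.2| = 1 then
      ENNReal.ofReal (transP γ (q.1 - q.2)) *
        ∫⁻ η, ENNReal.ofReal
          ((Real.sqrt (f (swapConf q.1 q.2 η)) - Real.sqrt (f η)) ^ 2) ∂ν
    else 0


lemma swap_eq_self {x y : ℤ} {η : Config} (h : η x = η y) : swapConf x y η = η := by
  funext z; unfold swapConf; split_ifs <;> simp_all

lemma ind_nonneg (a : Bool) : 0 ≤ ind a := by cases a <;> simp [ind]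

lemma ind_add_one {a c : Bool} (h : a ≠ c) : ind a + ind c = 1 := by
  cases a <;> cases c <;> simp_all [ind]

lemma ctilde_ge_one {x y : ℤ} {η : Config} (hxy : |x - y| = 1) (h : η x ≠ η y) :
    1 ≤ ctilde x y η := by
  have := ind_nonneg (η (x - 1)); have := ind_nonneg (η (x + 1))
  have := ind_nonneg (η (y - 1)); have := ind_nonneg (η (y + 1))
  rcases abs_eq (by norm_num : (0:ℤ) ≤ 1) |>.mp hxy with h1 | h1
  · have hy : y = x - 1 := by omega
    subst hy
    have h2 : ind (η (x - 1)) + ind (η (x - 1 + 1)) = 1 := by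
      rw [show x - 1 + 1 = x from by ring]
      exact ind_add_one (Ne.symm h)
    unfold ctilde; linarith
  · have hy : y = x + 1 := by omega
    subst hy
    have h2 : ind (η (x + 1)) + ind (η (x + 1 - 1)) = 1 := by
      rw [show x + 1 - 1 = x from by ring]
      exact ind_add_one (Ne.symm h)
    unfold ctilde; linarith

lemma key (x y : ℤ) (hxy : |x - y| = 1) (f : Config → ℝ) (η : Config) :
    ENNReal.ofReal ((Real.sqrt (f (swapConf x y η)) - Real.sqrt (f η)) ^ 2) ≤
      ENNReal.ofReal (ctilde x y η *
        (Real.sqrt (f (swapConf x y η)) - Real.sqrt (f η)) ^ 2) := by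
  by_cases h : η x = η y
  · rw [swap_eq_self h]; simp
  · apply ENNReal.ofReal_le_ofReal
    have h1 := ctilde_ge_one hxy h
    nlinarith [sq_nonneg (Real.sqrt (f (swapConf x y η)) - Real.sqrt (f η))]

/-- the Dirichlet form dominates its nearest-neighbor part. -/
theorem statement14 (γ b : ℝ) (hγ : γ ∈ Set.Ioo (0 : ℝ) 2) (hb : b ∈ Set.Ioo (0 : ℝ) 1)
    (ν : MeasureTheory.Measure Config) (hν : IsBernoulliProduct b ν)
    (f : Config → ℝ) (hf : Measurable f) (hf0 : ∀ η : Config, 0 ≤ f η)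
    (hf1 : (∫ η, f η ∂ν) = 1) :
    dirichletFormNN γ ν f ≤ dirichletForm γ ν f := by
  unfold dirichletFormNN dirichletForm
  apply mul_le_mul_right
  apply ENNReal.tsum_le_tsum
  intro q
  split_ifs with h
  · exact mul_le_mul_right (MeasureTheory.lintegral_mono (key q.1 q.2 h f)) _
  · exact zero_le
end
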